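/- Let G be an ordered context-free grammar in which every nonterminal is useful. If G has no ε-rules and no cycles of unit rules, then G is well-ordered, i.e., for every string w the set P_G(w) of parse trees of w is well-ordered under the lexicographic order ≺_G (every nonempty subset of P_G(w) has a ≺_G-least element). -/

import Mathlib

namespace Ocfg

/-- A symbol: nonterminal or terminal. -/
inductive Sym (N T : Type) : Type
  | nt : N → Sym N T
  | tm : T → Sym N T

/-- An (ordered) context-free grammar: each nonterminal has an ordered
list of right-hand sides; `start` is the start nonterminal. -/
structure OCFG (N T : Type) : Type where
  prods : N → List (List (Sym N T))
  start : N

/-- Ordered ranked trees used as parse trees: terminal leaves, ε-leaves,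
and internal nodes labelled by a nonterminal together with the index of
the rule applied there. -/
inductive PTree (N T : Type) : Type
  | leaf : T → PTree N T
  | eps  : PTree N T
  | node : N → ℕ → List (PTree N T) → PTree N T

mutual
/-- `ParseFrom G A w t`: `t` is a parse tree with root nonterminal `A`
and yield `w`. -/
inductive ParseFrom {N T : Type} (G : OCFG N T) : N → List T → PTree N T → Prop
  | epsNode (A : N) (i : ℕ) :
      (G.prods A)[i]? = some [] →
      ParseFrom G A [] (PTree.node A i [PTree.eps])
  | node (A : N) (i : ℕ) (r : List (Sym N T)) (w : List T) (cs : List (PTree N T)) :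
      (G.prods A)[i]? = some r → r ≠ [] → ParseSeq G r w cs →
      ParseFrom G A w (PTree.node A i cs)

/-- `ParseSeq G r w cs`: the trees `cs` match, in order, the symbols of `r`,
with concatenated yield `w`. -/
inductive ParseSeq {N T : Type} (G : OCFG N T) : List (Sym N T) → List T → List (PTree N T) → Prop
  | nil : ParseSeq G [] [] []
  | consTm (a : T) (r : List (Sym N T)) (w : List T) (cs : List (PTree N T)) :
      ParseSeq G r w cs →
      ParseSeq G (Sym.tm a :: r) (a :: w) (PTree.leaf a :: cs)
  | consNt (A : N) (t : PTree N T) (wA : List T) (r : List (Sym N T)) (w : List T)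
      (cs : List (PTree N T)) :
      ParseFrom G A wA t → ParseSeq G r w cs →
      ParseSeq G (Sym.nt A :: r) (wA ++ w) (t :: cs)
end

/-- The set `P_G(w)` of parse trees of `w`. -/
def parseTrees {N T : Type} (G : OCFG N T) (w : List T) : Set (PTree N T) :=
  {t | ParseFrom G G.start w t}

/-- `n(t)`: the sequence of rule indices of `t`, in pre-order. -/
def PTree.idxSeq {N T : Type} : PTree N T → List ℕ
  | .leaf _ => []
  | .eps => []
  | .node _ i cs => i :: (cs.attach.map (fun c => PTree.idxSeq c.1)).flatten
decreasing_by
  have := List.sizeOf_lt_of_mem c.2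
  simp_wf
  omega

/-- The order `≺_G` on parse trees: lexicographic comparison of the
pre-order rule-index sequences. -/
def treeLT {N T : Type} (t₁ t₂ : PTree N T) : Prop :=
  List.Lex (· < ·) t₁.idxSeq t₂.idxSeq

/-- One-step derivation relation `⇒` of the underlying CFG. -/
def OCFG.Step {N T : Type} (G : OCFG N T) (u v : List (Sym N T)) : Prop :=
  ∃ (u₁ u₂ : List (Sym N T)) (A : N) (r : List (Sym N T)),
    r ∈ G.prods A ∧ u = u₁ ++ Sym.nt A :: u₂ ∧ v = u₁ ++ r ++ u₂

/-- `⇒*`. -/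
def OCFG.Derives {N T : Type} (G : OCFG N T) : List (Sym N T) → List (Sym N T) → Prop :=
  Relation.ReflTransGen G.Step

/-- A nonterminal is useful if it occurs in some sentential form derivable from
the start symbol and derives some terminal string. -/
def Useful {N T : Type} (G : OCFG N T) (A : N) : Prop :=
  (∃ u₁ u₂ : List (Sym N T), G.Derives [Sym.nt G.start] (u₁ ++ Sym.nt A :: u₂)) ∧
  (∃ w : List T, G.Derives [Sym.nt A] (w.map Sym.tm))

/-- `G` is cyclic if `A ⇒⁺ A` for some nonterminal `A`. -/
def Cyclic {N T : Type} (G : OCFG N T) : Prop :=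
  ∃ A : N, Relation.TransGen G.Step [Sym.nt A] [Sym.nt A]

/-- `G` has no ε-rules. -/
def NoEpsRules {N T : Type} (G : OCFG N T) : Prop :=
  ∀ (A : N) (r : List (Sym N T)), r ∈ G.prods A → r ≠ []

/-- A unit-rule step: `A → B` is a rule of `G`. -/
def UnitStep {N T : Type} (G : OCFG N T) (A B : N) : Prop :=
  [Sym.nt B] ∈ G.prods A

/-- `G` has a cycle of unit rules. -/
def HasUnitCycle {N T : Type} (G : OCFG N T) : Prop :=
  ∃ A : N, Relation.TransGen (UnitStep G) A A

/-- `G` is well-ordered: for every string `w`, every nonempty subset of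
`P_G(w)` has a `≺_G`-least element. -/
def WellOrderedG {N T : Type} (G : OCFG N T) : Prop :=
  ∀ (w : List T) (Φ : Set (PTree N T)), Φ ⊆ parseTrees G w → Φ.Nonempty →
    ∃ t ∈ Φ, ∀ t' ∈ Φ, t = t' ∨ treeLT t t'

/-- `t` is the `≺_G`-least parse tree of `w`. -/
def IsLeastTree {N T : Type} (G : OCFG N T) (w : List T) (t : PTree N T) : Prop :=
  ParseFrom G G.start w t ∧ ∀ t', ParseFrom G G.start w t' → t = t' ∨ treeLT t t'

/-- `G` has least parse trees. -/
def HasLeastTrees {N T : Type} (G : OCFG N T) : Prop :=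
  ∀ w : List T, (parseTrees G w).Nonempty → ∃ t, IsLeastTree G w t

/-- Derivations of a given length (number of steps). -/
inductive DerivesIn {N T : Type} (G : OCFG N T) : List (Sym N T) → List (Sym N T) → ℕ → Prop
  | refl (u : List (Sym N T)) : DerivesIn G u u 0
  | step (u v w : List (Sym N T)) (n : ℕ) :
      G.Step u v → DerivesIn G v w n → DerivesIn G u w (n + 1)

/-- Number of rule applications in a parse tree (= length of the
corresponding leftmost derivation). -/
def PTree.numRules {N T : Type} : PTree N T → ℕ
  | .leaf _ => 0
  | .eps => 0
  | .node _ _ cs => 1 + ((cs.attach.map (fun c => PTree.numRules c.1)).foldr (· + ·) 0)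
decreasing_by
  have := List.sizeOf_lt_of_mem c.2
  simp_wf
  omega

/-- Height of a tree: a single leaf has height 0. -/
def PTree.height {N T : Type} : PTree N T → ℕ
  | .leaf _ => 0
  | .eps => 0
  | .node _ _ cs => 1 + ((cs.attach.map (fun c => PTree.height c.1)).foldr max 0)
decreasing_by
  have := List.sizeOf_lt_of_mem c.2
  simp_wf
  omega

/-- The language of `G`. -/
def langOf {N T : Type} (G : OCFG N T) : Language T :=
  {w | ∃ t, ParseFrom G G.start w t}

/-!
Without ε-rules every yield is nonempty, so a node with at least two children gives each child a
strictly shorter yield; the only children with the same yield are those of unit rules, and without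
unit cycles these form a well-founded relation on the finitely many nonterminals. Induction on the
length of the yield and then along unit rules shows that every string has finitely many parse
trees. Since rule indices rebuild a parse tree top-down, `n(t)` determines `t`, so the
lexicographically least `n(t)` over a finite nonempty set of parse trees singles out a least tree.
-/

variable {N T : Type} {G : OCFG N T}

@[simp]
theorem PTree.idxSeq_node (A : N) (i : ℕ) (cs : List (PTree N T)) :
    (PTree.node A i cs).idxSeq = i :: (cs.map PTree.idxSeq).flatten := by
  rw [PTree.idxSeq, List.attach_map_val]

mutual
theorem ParseFrom.yield_ne_nil (hne : NoEpsRules G) {A : N} {w : List T} {t : PTree N T} :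
    ParseFrom G A w t → w ≠ []
  | .epsNode A _ hi => absurd rfl (hne A [] (List.mem_of_getElem? hi))
  | .node _ _ _ _ _ _ hr hs => hs.yield_ne_nil hne hr

theorem ParseSeq.yield_ne_nil (hne : NoEpsRules G) {r : List (Sym N T)} {w : List T}
    {cs : List (PTree N T)} : ParseSeq G r w cs → r ≠ [] → w ≠ []
  | .nil, hr => absurd rfl hr
  | .consTm _ _ _ _ _, _ => List.cons_ne_nil _ _
  | .consNt _ _ _ _ _ _ hf _, _ => by simp [hf.yield_ne_nil hne]
end

mutual
theorem ParseFrom.eq_of_idxSeq_append_eq {A : N} {w w' : List T} {t t' : PTree N T}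
    {k k' : List ℕ} : ParseFrom G A w t → ParseFrom G A w' t' →
    t.idxSeq ++ k = t'.idxSeq ++ k' → t = t' ∧ k = k'
  | .epsNode _ _ _, .epsNode _ _ _, heq => by simp_all
  | .epsNode _ _ _, .node _ _ _ _ _ _ _ _, heq => by simp_all
  | .node _ _ _ _ _ _ _ _, .epsNode _ _ _, heq => by simp_all
  | .node _ _ r _ _ hi _ hs, .node _ _ _ _ _ hi' _ hs', heq => by
    simp only [PTree.idxSeq_node, List.cons_append, List.cons.injEq] at heq
    obtain ⟨rfl, htail⟩ := heq
    obtain rfl : r = _ := Option.some.inj (hi.symm.trans hi')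
    obtain ⟨rfl, rfl⟩ := hs.eq_of_idxSeq_append_eq hs' htail
    exact ⟨rfl, rfl⟩

theorem ParseSeq.eq_of_idxSeq_append_eq {r : List (Sym N T)} {w w' : List T}
    {cs cs' : List (PTree N T)} {k k' : List ℕ} : ParseSeq G r w cs → ParseSeq G r w' cs' →
    (cs.map PTree.idxSeq).flatten ++ k = (cs'.map PTree.idxSeq).flatten ++ k' →
    cs = cs' ∧ k = k'
  | .nil, .nil, heq => by simpa using heq
  | .consTm _ _ _ _ hs, .consTm _ _ _ _ hs', heq => by
    simp only [List.map_cons, List.flatten_cons, PTree.idxSeq, List.nil_append] at heq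
    obtain ⟨rfl, rfl⟩ := hs.eq_of_idxSeq_append_eq hs' heq
    exact ⟨rfl, rfl⟩
  | .consNt _ _ _ _ _ _ hf hs, .consNt _ _ _ _ _ _ hf' hs', heq => by
    simp only [List.map_cons, List.flatten_cons, List.append_assoc] at heq
    obtain ⟨rfl, htail⟩ := hf.eq_of_idxSeq_append_eq hf' heq
    obtain ⟨rfl, rfl⟩ := hs.eq_of_idxSeq_append_eq hs' htail
    exact ⟨rfl, rfl⟩
end

theorem ParseFrom.eq_of_idxSeq_eq {A : N} {w w' : List T} {t t' : PTree N T}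
    (h : ParseFrom G A w t) (h' : ParseFrom G A w' t') (heq : t.idxSeq = t'.idxSeq) : t = t' :=
  (h.eq_of_idxSeq_append_eq (k := []) (k' := []) h' (by rw [heq])).1

theorem wellOrderedG_of_finite (hfin : ∀ w, (parseTrees G w).Finite) : WellOrderedG G := by
  intro w Φ hΦ hne
  obtain ⟨t, ht, hmin⟩ := Set.exists_min_image Φ PTree.idxSeq ((hfin w).subset hΦ) hne
  refine ⟨t, ht, fun t' ht' => (hmin t' ht').lt_or_eq.symm.imp (fun h => ?_) id⟩
  exact (hΦ ht).eq_of_idxSeq_eq (hΦ ht') h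

def SymParse (G : OCFG N T) : Sym N T → List T → PTree N T → Prop
  | .tm a, w, c => w = [a] ∧ c = .leaf a
  | .nt B, w, c => ParseFrom G B w c

theorem SymParse.yield_ne_nil (hne : NoEpsRules G) {s : Sym N T} {w : List T} {c : PTree N T}
    (h : SymParse G s w c) : w ≠ [] := by
  cases s with
  | tm a => simp [h.1]
  | nt B => exact ParseFrom.yield_ne_nil hne h

theorem finite_symParse {s : Sym N T} {w : List T}
    (h : ∀ B, s = .nt B → {t | ParseFrom G B w t}.Finite) : {c | SymParse G s w c}.Finite := by
  cases s with
  | tm a => exact (Set.finite_singleton (PTree.leaf a)).subset fun c hc => hc.2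
  | nt B => exact h B rfl

theorem ParseSeq.cons_inv {s : Sym N T} {r : List (Sym N T)} {w : List T}
    {cs : List (PTree N T)} (h : ParseSeq G (s :: r) w cs) :
    ∃ u v c cs', w = u ++ v ∧ cs = c :: cs' ∧ SymParse G s u c ∧ ParseSeq G r v cs' := by
  cases h with
  | consTm a _ v cs' h => exact ⟨[a], v, _, cs', rfl, rfl, ⟨rfl, rfl⟩, h⟩
  | consNt B t u _ v cs' hf h => exact ⟨u, v, t, cs', rfl, rfl, hf, h⟩

theorem parseSeq_nil_subset (w : List T) : {cs | ParseSeq G [] w cs} ⊆ {[]} := by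
  rintro cs ⟨⟩
  rfl

theorem parseSeq_singleton_subset (s : Sym N T) (w : List T) :
    {cs | ParseSeq G [s] w cs} ⊆ (fun c => [c]) '' {c | SymParse G s w c} := by
  intro cs h
  obtain ⟨u, v, c, cs', rfl, rfl, hc, hv⟩ := ParseSeq.cons_inv h
  cases hv
  exact ⟨c, by simpa using hc, rfl⟩

theorem parseSeq_cons_subset (s : Sym N T) (r : List (Sym N T)) (w : List T) :
    {cs | ParseSeq G (s :: r) w cs} ⊆
      ⋃ i ∈ Finset.range (w.length + 1), Function.uncurry List.cons ''
        ({c | SymParse G s (w.take i) c} ×ˢ {cs | ParseSeq G r (w.drop i) cs}) := by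
  intro cs h
  obtain ⟨u, v, c, cs', rfl, rfl, hc, hv⟩ := ParseSeq.cons_inv h
  refine Set.mem_iUnion₂.2 ⟨u.length, by simp, (c, cs'), ⟨?_, ?_⟩, rfl⟩ <;> simpa

theorem parseSeq_cons_cons_subset (hne : NoEpsRules G) (s s' : Sym N T) (r : List (Sym N T))
    (w : List T) :
    {cs | ParseSeq G (s :: s' :: r) w cs} ⊆
      ⋃ i ∈ Finset.Ioo 0 w.length, Function.uncurry List.cons ''
        ({c | SymParse G s (w.take i) c} ×ˢ {cs | ParseSeq G (s' :: r) (w.drop i) cs}) := by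
  intro cs h
  obtain ⟨u, v, c, cs', rfl, rfl, hc, hv⟩ := ParseSeq.cons_inv h
  have hu := hc.yield_ne_nil hne
  have hv' := hv.yield_ne_nil hne (List.cons_ne_nil _ _)
  refine Set.mem_iUnion₂.2 ⟨u.length, ?_, (c, cs'), ⟨?_, ?_⟩, rfl⟩
  · simp [List.length_pos_iff, hu, hv']
  all_goals simpa

theorem finite_parseSeq (r : List (Sym N T)) (w : List T)
    (h : ∀ B w', w'.length ≤ w.length → {t | ParseFrom G B w' t}.Finite) :
    {cs | ParseSeq G r w cs}.Finite := by
  induction r generalizing w with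
  | nil => exact (Set.finite_singleton _).subset (parseSeq_nil_subset w)
  | cons s r ih =>
    refine Set.Finite.subset (Set.Finite.biUnion (Finset.finite_toSet _) fun i _ => ?_)
      (parseSeq_cons_subset s r w)
    refine ((finite_symParse fun B _ => h B _ ?_).prod (ih _ fun B w' hw' => h B w' ?_)).image _
    · simp
    · exact hw'.trans (by simp)

theorem wellFounded_unitStep [Finite N] (hnu : ¬ HasUnitCycle G) :
    WellFounded (flip (UnitStep G)) := by
  have : Std.Irrefl (Relation.TransGen (flip (UnitStep G))) :=
    ⟨fun A h => hnu ⟨A, Relation.transGen_swap.1 h⟩⟩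
  exact Subrelation.wf Relation.TransGen.single (Finite.wellFounded_of_trans_of_irrefl _)

theorem parseFrom_subset (hne : NoEpsRules G) (A : N) (w : List T) :
    {t | ParseFrom G A w t} ⊆
      ⋃ i : Fin (G.prods A).length, PTree.node A i '' {cs | ParseSeq G (G.prods A)[i] w cs} := by
  intro t h
  cases h with
  | epsNode _ _ hi => exact absurd rfl (hne A [] (List.mem_of_getElem? hi))
  | node _ i r _ cs hi _ hs =>
    obtain ⟨hlt, rfl⟩ := List.getElem?_eq_some_iff.1 hi
    exact Set.mem_iUnion.2 ⟨⟨i, hlt⟩, cs, hs, rfl⟩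

theorem finite_parseSeq_of_mem_prods (hne : NoEpsRules G) {A : N} {r : List (Sym N T)}
    (hr : r ∈ G.prods A) (w : List T)
    (hshort : ∀ B w', w'.length < w.length → {t | ParseFrom G B w' t}.Finite)
    (hunit : ∀ B, UnitStep G A B → {t | ParseFrom G B w t}.Finite) :
    {cs | ParseSeq G r w cs}.Finite := by
  match r, hr with
  | [], hr => exact absurd rfl (hne A [] hr)
  | [s], hr =>
    refine ((finite_symParse fun B hB => hunit B ?_).image _).subset (parseSeq_singleton_subset s w)
    rwa [UnitStep, ← hB]
  | s :: s' :: r, _ =>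
    refine Set.Finite.subset (Set.Finite.biUnion (Finset.finite_toSet _) fun i hi => ?_)
      (parseSeq_cons_cons_subset hne s s' r w)
    obtain ⟨hi0, hiw⟩ := Finset.mem_Ioo.1 hi
    refine ((finite_symParse fun B _ => hshort B _ ?_).prod
      (finite_parseSeq _ _ fun B w' hw' => hshort B w' ?_)).image _
    · rw [List.length_take]; omega
    · rw [List.length_drop] at hw'; omega

theorem finite_parseFrom [Finite N] (hne : NoEpsRules G) (hnu : ¬ HasUnitCycle G) (w : List T)
    (A : N) : {t | ParseFrom G A w t}.Finite := by
  induction hw : w.length using Nat.strong_induction_on generalizing w A with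
  | _ n ihn =>
    induction A using (wellFounded_unitStep hnu).induction with
    | _ A iha =>
      refine Set.Finite.subset (Set.finite_iUnion fun i => Set.Finite.image _ ?_)
        (parseFrom_subset hne A w)
      exact finite_parseSeq_of_mem_prods hne (List.getElem_mem _) w
        (fun B w' hw' => ihn _ (hw ▸ hw') w' B rfl) iha

end Ocfg

open Ocfg

/-- An oCFG with all nonterminals useful, no ε-rules and no cycles
of unit rules is well-ordered. -/
theorem stmt3 {N T : Type} [Fintype N] [Fintype T] (G : OCFG N T)
    (huseful : ∀ A : N, Useful G A)
    (hne : NoEpsRules G) (hnu : ¬ HasUnitCycle G) :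
    WellOrderedG G :=
  wellOrderedG_of_finite fun w => finite_parseFrom hne hnu w G.start
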